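/- Let Π be a PARITY_n program with no singleton loops in which every rule body is consistent. Suppose x ← B is a rule of Π such that 'not not x' ∈ B and S(B) is a singleton {I} where I has even cardinality. Then Π ∖ {x ← B} is also a PARITY_n program. -/

import Mathlib

/-- A rule element: ⊤, ⊥, a variable `x`, `not x`, or `not not x`.
Variables are indexed by natural numbers; the variable `x_i` of the paper is index `i - 1`. -/
inductive RuleElem : Type
  | top : RuleElem
  | bot : RuleElem
  | pos : ℕ → RuleElem
  | neg : ℕ → RuleElem
  | negneg : ℕ → RuleElem
  deriving DecidableEq

/-- A rule `H ← B`: the head is a variable (`some x`) or ⊥ (`none`);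
the body is a finite set of rule elements. -/
structure Rule : Type where
  head : Option ℕ
  body : Finset RuleElem
  deriving DecidableEq

/-- A canonical program is a finite set of rules. -/
abbrev Program : Type := Finset Rule

/-- Satisfaction of a rule element by a set of variables. -/
def satElem (I : Set ℕ) : RuleElem → Prop
  | .top => True
  | .bot => False
  | .pos x => x ∈ I
  | .neg x => x ∉ I
  | .negneg x => x ∈ I

/-- `I ⊨ B`: `I` satisfies every element of the body `B`. -/
def satBody (I : Set ℕ) (B : Finset RuleElem) : Prop := ∀ e ∈ B, satElem I e

/-- `J` is closed under the program `Π`: for every rule `H ← B` with `J ⊨ B`,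
the head is a variable belonging to `J`. -/
def closedUnder (J : Set ℕ) (P : Program) : Prop :=
  ∀ r ∈ P, satBody J r.body → ∃ x, r.head = some x ∧ x ∈ J

/-- `Cn P`: the least set of variables closed under `P` (used for basic programs). -/
def Cn (P : Program) : Set ℕ := ⋂₀ {J : Set ℕ | closedUnder J P}

/-- The reduction of a rule element with respect to `I`. -/
def reduceElem (I : Finset ℕ) : RuleElem → RuleElem
  | .negneg x => if x ∈ I then .top else .bot
  | .neg x => if x ∈ I then .bot else .top
  | e => e

/-- The reduct `P^I` of a canonical program. -/
def reduct (P : Program) (I : Finset ℕ) : Program :=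
  P.image (fun r => ⟨r.head, r.body.image (reduceElem I)⟩)

/-- `I` is an answer set of `P` iff `I = Cn(P^I)`. -/
def isAnswerSet (P : Program) (I : Finset ℕ) : Prop :=
  (I : Set ℕ) = Cn (reduct P I)

/-- The variables occurring in a rule element. -/
def elemVars : RuleElem → Finset ℕ
  | .top => ∅
  | .bot => ∅
  | .pos x => {x}
  | .neg x => {x}
  | .negneg x => {x}

/-- The variables occurring in a rule. -/
def ruleVars (r : Rule) : Finset ℕ :=
  (r.head.elim ∅ fun x => {x}) ∪ r.body.biUnion elemVars

/-- The variables occurring in a program. -/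
def progVars (P : Program) : Finset ℕ := P.biUnion ruleVars

/-- A program is normal if no `not not x` occurs in it. -/
def isNormal (P : Program) : Prop := ∀ r ∈ P, ∀ x, RuleElem.negneg x ∉ r.body

/-- `P` is a PARITY_n program: all its variables are among `{x_1, …, x_n}`
(indices `0, …, n-1`) and its answer sets, as subsets of `{x_1, …, x_n}`,
are exactly the subsets of odd cardinality. -/
def isParityProgram (n : ℕ) (P : Program) : Prop :=
  progVars P ⊆ Finset.range n ∧
  ∀ I : Finset ℕ, isAnswerSet P I ↔ (I ⊆ Finset.range n ∧ Odd I.card)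

/-- `M(Comp(P))`, the models (subsets of `V`) of the completion of `P` over `V`:
for each variable `x ∈ V`, `x` holds iff the body of some rule with head `x` is
(classically) satisfied; and the body of no rule with head ⊥ is satisfied.
(The classical reading of `not` coincides with `satElem`.) -/
def compModels (V : Finset ℕ) (P : Program) : Set (Finset ℕ) :=
  {I | I ⊆ V ∧
    (∀ x ∈ V, (x ∈ I ↔ ∃ r ∈ P, r.head = some x ∧ satBody (↑I) r.body)) ∧
    ∀ r ∈ P, r.head = none → ¬ satBody (↑I) r.body}

/-- `P` has no singleton loops: no rule `x ← B` with head a variable `x ∈ var(B)`. -/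
def noSingletonLoops (P : Program) : Prop :=
  ∀ r ∈ P, ∀ x, r.head = some x → RuleElem.pos x ∉ r.body

/-- `S(B)`: the subsets of the ambient variable set `{x_1, …, x_n}` satisfying `B`. -/
def SB (n : ℕ) (B : Finset RuleElem) : Set (Finset ℕ) :=
  {I | I ⊆ Finset.range n ∧ satBody (↑I) B}

/-- Every rule body of `P` is consistent (w.r.t. the ambient variable set). -/
def allBodiesConsistent (n : ℕ) (P : Program) : Prop :=
  ∀ r ∈ P, (SB n r.body).Nonempty

/-- A PARITY_n program is standard if it has no singleton loops, every rule body is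
consistent, and for every rule `x ← B` with head a variable `x`, if `S(B ∪ {x})` is
a singleton then `not not x ∉ B`. -/
def isStandard (n : ℕ) (P : Program) : Prop :=
  isParityProgram n P ∧ noSingletonLoops P ∧ allBodiesConsistent n P ∧
    ∀ r ∈ P, ∀ x, r.head = some x →
      (∃ I : Finset ℕ, SB n (insert (RuleElem.pos x) r.body) = {I}) →
      RuleElem.negneg x ∉ r.body

lemma satElem_reduce_mono {J : Finset ℕ} {K1 K2 : Set ℕ} (h : K1 ⊆ K2) (e : RuleElem) :
    satElem K1 (reduceElem J e) → satElem K2 (reduceElem J e) := by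
  cases e with
  | top => exact fun _ => trivial
  | bot => exact id
  | pos y => exact fun h' => h h'
  | neg y => simp only [reduceElem]; split <;> simp [satElem]
  | negneg y => simp only [reduceElem]; split <;> simp [satElem]

lemma satBody_of_reduced {J : Finset ℕ} {K : Set ℕ} (hK : K ⊆ ↑J) {B : Finset RuleElem}
    (h : satBody K (B.image (reduceElem J))) : satBody (↑J) B := by
  intro e he
  have h' := h _ (Finset.mem_image_of_mem _ he)
  cases e with
  | top => trivial
  | bot => exact h'.elim
  | pos y => exact hK h'
  | neg y =>
      simp only [reduceElem] at h'
      by_cases hy : y ∈ J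
      · simp [hy, satElem] at h'
      · simpa [satElem] using hy
  | negneg y =>
      simp only [reduceElem] at h'
      by_cases hy : y ∈ J
      · simpa [satElem] using hy
      · simp [hy, satElem] at h'

lemma closedUnder_anti {K : Set ℕ} {Q1 Q2 : Program} (h : Q1 ⊆ Q2) :
    closedUnder K Q2 → closedUnder K Q1 := fun hc r hr => hc r (h hr)

lemma Cn_subset {Q : Program} {K : Set ℕ} (h : closedUnder K Q) : Cn Q ⊆ K :=
  Set.sInter_subset_of_mem h

lemma Cn_mono {Q1 Q2 : Program} (h : Q1 ⊆ Q2) : Cn Q1 ⊆ Cn Q2 :=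
  Set.sInter_subset_sInter (fun _ hK => closedUnder_anti h hK)

lemma Cn_closed_of_reduct (P : Program) (I : Finset ℕ)
    (hne : ∃ K : Set ℕ, closedUnder K (reduct P I)) :
    closedUnder (Cn (reduct P I)) (reduct P I) := by
  obtain ⟨K, hK⟩ := hne
  intro r hr hsat
  obtain ⟨r', hr', rfl⟩ := Finset.mem_image.1 hr
  have hmem : (⟨r'.head, r'.body.image (reduceElem I)⟩ : Rule) ∈ reduct P I :=
    Finset.mem_image_of_mem _ hr'
  have key : ∀ S : Set ℕ, closedUnder S (reduct P I) →
      ∃ y, r'.head = some y ∧ y ∈ S := by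
    intro S hS
    have hCS : Cn (reduct P I) ⊆ S := Cn_subset hS
    have : satBody S (r'.body.image (reduceElem I)) := by
      intro e he
      obtain ⟨e', he', rfl⟩ := Finset.mem_image.1 he
      exact satElem_reduce_mono hCS e' (hsat _ (Finset.mem_image_of_mem _ he'))
    exact hS ⟨r'.head, r'.body.image (reduceElem I)⟩ hmem this
  obtain ⟨y, hy1, _⟩ := key K hK
  refine ⟨y, hy1, ?_⟩
  intro S hS
  obtain ⟨y', hy1', hy2'⟩ := key S hS
  rw [hy1] at hy1'
  exact (Option.some_inj.1 hy1') ▸ hy2'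

lemma exists_closed_of_answer {Q P : Program} {J : Finset ℕ} (h : (↑J : Set ℕ) = Cn Q) :
    ∃ K : Set ℕ, closedUnder K Q := by
  by_contra hc
  push_neg at hc
  have hempty : {K : Set ℕ | closedUnder K Q} = ∅ := by
    ext K; simpa using hc K
  have huniv : Cn Q = Set.univ := by rw [Cn, hempty, Set.sInter_empty]
  obtain ⟨m, hm⟩ := Infinite.exists_notMem_finset J
  apply hm
  have : m ∈ (↑J : Set ℕ) := by rw [h, huniv]; trivial
  exact_mod_cast this

lemma answerSet_closed {Q : Program} {J : Finset ℕ} (h : isAnswerSet Q J) :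
    closedUnder (↑J) (reduct Q J) := by
  have hne := exists_closed_of_answer (P := Q) h
  have := Cn_closed_of_reduct Q J hne
  rw [show ((↑J : Set ℕ)) = Cn (reduct Q J) from h]
  exact this

/-- If `x ← B` is a rule of a PARITY_n program `P` (with no singleton loops and all
bodies consistent) such that `not not x ∈ B` and `S(B)` is a singleton `{I}` with
`I` of even cardinality, then removing `x ← B` yields a PARITY_n program. -/
theorem remove_even_fullcover_rule (n : ℕ) (P : Program) (x : ℕ) (B : Finset RuleElem)
    (hpar : isParityProgram n P) (hnsl : noSingletonLoops P)
    (hcons : allBodiesConsistent n P)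
    (hr : (⟨some x, B⟩ : Rule) ∈ P) (hnn : RuleElem.negneg x ∈ B)
    (I : Finset ℕ) (hSB : SB n B = {I}) (heven : Even I.card) :
    isParityProgram n (P.erase ⟨some x, B⟩) := by
  set r₀ : Rule := ⟨some x, B⟩ with hr₀
  set P' := P.erase r₀ with hP'
  have hsub : ∀ J : Finset ℕ, reduct P' J ⊆ reduct P J := fun J =>
    Finset.image_subset_image (Finset.erase_subset _ _)
  have hdec : ∀ J : Finset ℕ,
      reduct P J = insert (⟨some x, B.image (reduceElem J)⟩ : Rule) (reduct P' J) := by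
    intro J
    unfold reduct
    conv_lhs => rw [← Finset.insert_erase hr]
    rw [Finset.image_insert]
  constructor
  · exact (Finset.biUnion_subset_biUnion_of_subset_left ruleVars
      (Finset.erase_subset _ _)).trans hpar.1
  · intro J
    constructor
    · intro hA
      have hcl' := answerSet_closed hA
      have hcl : closedUnder (↑J) (reduct P J) := by
        intro r hrm hsat
        rw [hdec J, Finset.mem_insert] at hrm
        cases hrm with
        | inl h' =>
            subst h'
            have hsB : satBody (↑J) B := satBody_of_reduced subset_rfl hsat
            exact ⟨x, rfl, hsB _ hnn⟩
        | inr h' => exact hcl' r h' hsat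
      have h1 : Cn (reduct P J) ⊆ ↑J := Cn_subset hcl
      have h2 : (↑J : Set ℕ) ⊆ Cn (reduct P J) := by
        rw [show ((↑J : Set ℕ)) = Cn (reduct P' J) from hA]
        exact Cn_mono (hsub J)
      exact (hpar.2 J).1 (Set.Subset.antisymm h2 h1)
    · rintro ⟨hJr, hodd⟩
      have hA : isAnswerSet P J := (hpar.2 J).2 ⟨hJr, hodd⟩
      have hnsat : ¬ satBody (↑J) B := by
        intro hs
        have hmem : J ∈ SB n B := ⟨hJr, hs⟩
        rw [hSB, Set.mem_singleton_iff] at hmem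
        subst hmem
        exact (Nat.not_odd_iff_even.2 heven) hodd
      have hclP := answerSet_closed hA
      have hclP' : closedUnder (↑J) (reduct P' J) := closedUnder_anti (hsub J) hclP
      have hCn' := Cn_closed_of_reduct P' J ⟨↑J, hclP'⟩
      have hCsub : Cn (reduct P' J) ⊆ ↑J := Cn_subset hclP'
      have hclC : closedUnder (Cn (reduct P' J)) (reduct P J) := by
        intro r hrm hsat
        rw [hdec J, Finset.mem_insert] at hrm
        cases hrm with
        | inl h' =>
            subst h'
            exact absurd (satBody_of_reduced hCsub hsat) hnsat
        | inr h' => exact hCn' r h' hsat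
      have h1 : Cn (reduct P J) ⊆ Cn (reduct P' J) := Cn_subset hclC
      have h2 : Cn (reduct P' J) ⊆ Cn (reduct P J) := Cn_mono (hsub J)
      show (↑J : Set ℕ) = Cn (reduct P' J)
      rw [show ((↑J : Set ℕ)) = Cn (reduct P J) from hA]
      exact Set.Subset.antisymm h1 h2
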